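/- arXiv:1506.09117 — 3 statements merged into one kernel-verified Lean document; each statement's English description precedes it below -/
import Mathlib

section
/- In the lattice of Section 4, the class 2K_X + L₁ + L₂ + L₃ equals 9T̃ - 5E₀ - Σ₁³(2E_i + 4E_i') - E₄, and its self-intersection is (2K_X + ΣL_i)² = 81 - 25 - 3(4 + 16) - 1 = -5; hence K_V² = -5 for the bidouble cover V, and after contracting 12 disjoint (-1)-curves, K_{V'}² = -5 + 12 = 7. -/
def ip9 (v w : Fin 9 → ℤ) : ℤ := v 0 * w 0 - ∑ i : Fin 8, v i.succ * w i.succ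

def K9X : Fin 9 → ℤ := ![-3, 1, 1, 1, 1, 1, 1, 1, 1]
def L9₁ : Fin 9 → ℤ := ![7, -3, -2, -3, -2, -3, -2, -3, -2]
def L9₂ : Fin 9 → ℤ := ![3, -1, -1, -1, -1, -1, -1, -1, 0]
def L9₃ : Fin 9 → ℤ := ![5, -3, -1, -2, -1, -2, -1, -2, -1]

theorem two_smul_K9X_add_L9_eq :
    (2 : ℤ) • K9X + L9₁ + L9₂ + L9₃ = ![9, -5, -2, -4, -2, -4, -2, -4, -1] := by
  ext i
  fin_cases i <;> rfl

theorem ip9_self_two_smul_K9X_add_L9 :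
    ip9 ((2 : ℤ) • K9X + L9₁ + L9₂ + L9₃) ((2 : ℤ) • K9X + L9₁ + L9₂ + L9₃) = -5 := by
  rw [two_smul_K9X_add_L9_eq]
  rfl

/-- Section 4: 2K_X+L₁+L₂+L₃ ≡ 9T̃-5E₀-Σ₁³(2E_i+4E_i')-E₄, with
self-intersection (2K_X+ΣL_i)² = 81-25-3(4+16)-1 = -5, hence K_V² = -5 and after
contracting 12 disjoint (-1)-curves K_{V'}² = -5+12 = 7. -/
theorem stmt9 :
    (2 : ℤ) • K9X + L9₁ + L9₂ + L9₃ = ![9, -5, -2, -4, -2, -4, -2, -4, -1] ∧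
    ip9 ((2 : ℤ) • K9X + L9₁ + L9₂ + L9₃) ((2 : ℤ) • K9X + L9₁ + L9₂ + L9₃) =
      81 - 25 - 3 * (4 + 16) - 1 ∧
    ip9 ((2 : ℤ) • K9X + L9₁ + L9₂ + L9₃) ((2 : ℤ) • K9X + L9₁ + L9₂ + L9₃) = -5 ∧
    ip9 ((2 : ℤ) • K9X + L9₁ + L9₂ + L9₃) ((2 : ℤ) • K9X + L9₁ + L9₂ + L9₃) + 12 = 7 := by
  refine ⟨two_smul_K9X_add_L9_eq, ?_, ip9_self_two_smul_K9X_add_L9, ?_⟩ <;>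
    rw [ip9_self_two_smul_K9X_add_L9] <;> norm_num
end

section
/- In the lattice of Section 5, 2K_X + L₁ + L₂ + L₃ = 11T̃ - 7E₀ - Σ₁⁴(2E_i + 4E_i') - E₅, with self-intersection 121 - 49 - 4(4+16) - 1 = -9; hence K_V² = -9, and after contracting 16 disjoint (-1)-curves the minimal model V' satisfies K_{V'}² = -9 + 16 = 7. -/
def ip13 (v w : Fin 11 → ℤ) : ℤ := v 0 * w 0 - ∑ i : Fin 10, v i.succ * w i.succ

def K13X : Fin 11 → ℤ := ![-3, 1, 1, 1, 1, 1, 1, 1, 1, 1, 1]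
def L13₁ : Fin 11 → ℤ := ![8, -4, -2, -2, -2, -3, -2, -3, -2, -3, -2]
def L13₂ : Fin 11 → ℤ := ![5, -3, -1, -2, -1, -2, -1, -2, -1, -1, -1]
def L13₃ : Fin 11 → ℤ := ![4, -2, -1, -2, -1, -1, -1, -1, -1, -2, 0]

lemma ip13_self_cons (t e₀ e₁ e₁' e₂ e₂' e₃ e₃' e₄ e₄' e₅ : ℤ) :
    ip13 ![t, e₀, e₁, e₁', e₂, e₂', e₃, e₃', e₄, e₄', e₅]
        ![t, e₀, e₁, e₁', e₂, e₂', e₃, e₃', e₄, e₄', e₅] =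
      t ^ 2 - e₀ ^ 2 - (e₁ ^ 2 + e₁' ^ 2) - (e₂ ^ 2 + e₂' ^ 2) - (e₃ ^ 2 + e₃' ^ 2)
        - (e₄ ^ 2 + e₄' ^ 2) - e₅ ^ 2 := by
  simp only [ip13, Fin.sum_univ_succ, Fin.sum_univ_zero, Fin.isValue, Matrix.cons_val_zero,
    Fin.succ_zero_eq_one, Matrix.cons_val_one, Fin.succ_one_eq_two, Matrix.cons_val,
    Fin.reduceSucc, add_zero]
  ring

lemma two_smul_K13X_add_L13 :
    (2 : ℤ) • K13X + L13₁ + L13₂ + L13₃ = ![11, -7, -2, -4, -2, -4, -2, -4, -2, -4, -1] := by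
  decide

/-- Section 5: 2K_X+L₁+L₂+L₃ ≡ 11T̃-7E₀-Σ₁⁴(2E_i+4E_i')-E₅ with self-intersection
121-49-4(4+16)-1 = -9; hence K_V² = -9 and K_{V'}² = -9+16 = 7. -/
theorem stmt13 :
    (2 : ℤ) • K13X + L13₁ + L13₂ + L13₃ = ![11, -7, -2, -4, -2, -4, -2, -4, -2, -4, -1] ∧
    ip13 ((2 : ℤ) • K13X + L13₁ + L13₂ + L13₃) ((2 : ℤ) • K13X + L13₁ + L13₂ + L13₃) =
      121 - 49 - 4 * (4 + 16) - 1 ∧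
    ip13 ((2 : ℤ) • K13X + L13₁ + L13₂ + L13₃) ((2 : ℤ) • K13X + L13₁ + L13₂ + L13₃) = -9 ∧
    ip13 ((2 : ℤ) • K13X + L13₁ + L13₂ + L13₃) ((2 : ℤ) • K13X + L13₁ + L13₂ + L13₃) + 16 = 7 := by
  have hsq : ip13 ((2 : ℤ) • K13X + L13₁ + L13₂ + L13₃) ((2 : ℤ) • K13X + L13₁ + L13₂ + L13₃) =
      121 - 49 - 4 * (4 + 16) - 1 := by
    rw [two_smul_K13X_add_L13, ip13_self_cons]
    norm_num
  exact ⟨two_smul_K13X_add_L13, hsq, by rw [hsq]; norm_num, by rw [hsq]; norm_num⟩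
end

section
/- The plane sextic F₆ = 4x⁶ - 273x⁴y² - 258x²y⁴ - 481y⁶ + 720x⁴yz + 1740x²y³z + 4020y⁵z - 520x⁴z² - 3190x²y²z² - 12670y⁴z² + 1200x²yz³ + 17700y³z³ + 900x²z⁴ - 9225y²z⁴ is absolutely irreducible over Q(i). -/
open MvPolynomial

/-- The sextic F₆ of the Appendix, viewed over the algebraic closure (here ℂ). -/
noncomputable def F₆ : MvPolynomial (Fin 3) ℂ :=
  let x : MvPolynomial (Fin 3) ℂ := X 0
  let y : MvPolynomial (Fin 3) ℂ := X 1
  let z : MvPolynomial (Fin 3) ℂ := X 2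
  4*x^6 - 273*x^4*y^2 - 258*x^2*y^4 - 481*y^6 + 720*x^4*y*z + 1740*x^2*y^3*z +
  4020*y^5*z - 520*x^4*z^2 - 3190*x^2*y^2*z^2 - 12670*y^4*z^2 + 1200*x^2*y*z^3 +
  17700*y^3*z^3 + 900*x^2*z^4 - 9225*y^2*z^4

noncomputable section
set_option synthInstance.maxHeartbeats 1000000
set_option maxHeartbeats 1600000

abbrev R2 : Type := MvPolynomial (Fin 2) ℂ

def qr : R2 := MvPolynomial.C ((4:ℂ)⁻¹)
def B4 : R2 := -273 * X 0 ^ 2 + 720 * X 0 * X 1 - 520 * X 1 ^ 2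
def B2 : R2 := -258 * X 0 ^ 4 + 1740 * X 0 ^ 3 * X 1 - 3190 * X 0 ^ 2 * X 1 ^ 2
  + 1200 * X 0 * X 1 ^ 3 + 900 * X 1 ^ 4
def B0 : R2 := -481 * X 0 ^ 6 + 4020 * X 0 ^ 5 * X 1 - 12670 * X 0 ^ 4 * X 1 ^ 2
  + 17700 * X 0 ^ 3 * X 1 ^ 3 - 9225 * X 0 ^ 2 * X 1 ^ 4

def g0 : Polynomial R2 := Polynomial.X ^ 3 + Polynomial.C (qr * B4) * Polynomial.X ^ 2
  + Polynomial.C (qr * B2) * Polynomial.X + Polynomial.C (qr * B0)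

def f0 : Polynomial R2 := g0.comp (Polynomial.X ^ 2)

lemma f0_eq : f0 = Polynomial.X ^ 6 + Polynomial.C (qr * B4) * Polynomial.X ^ 4
    + Polynomial.C (qr * B2) * Polynomial.X ^ 2 + Polynomial.C (qr * B0) := by
  simp only [f0, g0, Polynomial.add_comp, Polynomial.mul_comp, Polynomial.pow_comp,
    Polynomial.X_comp, Polynomial.C_comp]
  ring

lemma hq : (4 : Polynomial R2) * Polynomial.C qr = 1 := by
  have h : (Polynomial.C (MvPolynomial.C (4:ℂ)) : Polynomial R2) = 4 := by
    simp only [map_ofNat]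
  rw [qr, ← h, ← Polynomial.C_mul, ← MvPolynomial.C_mul]
  norm_num

lemma hF : (MvPolynomial.finSuccEquiv ℂ 2) F₆ = 4 * f0 := by
  have h1 : (X 1 : MvPolynomial (Fin 3) ℂ) = X (Fin.succ 0) := rfl
  have h2 : (X 2 : MvPolynomial (Fin 3) ℂ) = X (Fin.succ 1) := rfl
  simp only [F₆, map_add, map_sub, map_mul, map_pow, map_ofNat, h1, h2,
    finSuccEquiv_X_zero, finSuccEquiv_X_succ]
  rw [f0_eq]
  simp only [B4, B2, B0, map_add, map_sub, map_mul, map_pow, map_ofNat, Polynomial.C_neg]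
  set Y0 := (Polynomial.C (MvPolynomial.X 0 : R2) : Polynomial R2) with hY0
  set Y1 := (Polynomial.C (MvPolynomial.X 1 : R2) : Polynomial R2) with hY1
  linear_combination (-((-273 * Y0^2 + 720 * Y0 * Y1 - 520 * Y1^2) * Polynomial.X ^ 4
      + (-258 * Y0^4 + 1740 * Y0^3 * Y1 - 3190 * Y0^2 * Y1^2 + 1200 * Y0 * Y1^3 + 900 * Y1^4) * Polynomial.X ^ 2
      + (-481 * Y0^6 + 4020 * Y0^5 * Y1 - 12670 * Y0^4 * Y1^2 + 17700 * Y0^3 * Y1^3 - 9225 * Y0^2 * Y1^4))) * hq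

lemma f0_monic : f0.Monic := by
  rw [f0_eq]
  monicity!

-- chunk 2: univariate core lemmas
namespace Stmt14

open Polynomial

def p4 : Polynomial ℂ := Polynomial.C ((4:ℂ)⁻¹) * (-273 * Polynomial.X ^ 2 + 720 * Polynomial.X - 520)
def p2 : Polynomial ℂ := Polynomial.C ((4:ℂ)⁻¹) * (-258 * Polynomial.X ^ 4 + 1740 * Polynomial.X ^ 3
  - 3190 * Polynomial.X ^ 2 + 1200 * Polynomial.X + 900)
def p0 : Polynomial ℂ := Polynomial.C ((4:ℂ)⁻¹) * (-481 * Polynomial.X ^ 6 + 4020 * Polynomial.X ^ 5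
  - 12670 * Polynomial.X ^ 4 + 17700 * Polynomial.X ^ 3 - 9225 * Polynomial.X ^ 2)

lemma p0_ne : p0 ≠ 0 := by
  intro h
  have := congrArg (Polynomial.eval 1) h
  simp [p0] at this
  norm_num at this

lemma rep2 (p : Polynomial ℂ) (h : p.natDegree ≤ 2) :
    p = Polynomial.C (p.coeff 2) * Polynomial.X ^ 2 + Polynomial.C (p.coeff 1) * Polynomial.X
      + Polynomial.C (p.coeff 0) := by
  ext n
  rcases n with _|_|_|n
  · simp
  · simp [Polynomial.coeff_add, Polynomial.coeff_C_mul, Polynomial.coeff_X_pow, Polynomial.coeff_C]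
  · simp [Polynomial.coeff_add, Polynomial.coeff_C_mul, Polynomial.coeff_X_pow, Polynomial.coeff_C]
  · rw [Polynomial.coeff_eq_zero_of_natDegree_lt (lt_of_le_of_lt h (by omega))]
    simp [Polynomial.coeff_add, Polynomial.coeff_C_mul, Polynomial.coeff_X_pow, Polynomial.coeff_C]

lemma rep3 (p : Polynomial ℂ) (h : p.natDegree ≤ 3) :
    p = Polynomial.C (p.coeff 3) * Polynomial.X ^ 3 + Polynomial.C (p.coeff 2) * Polynomial.X ^ 2
      + Polynomial.C (p.coeff 1) * Polynomial.X + Polynomial.C (p.coeff 0) := by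
  ext n
  rcases n with _|_|_|_|n
  · simp
  · simp [Polynomial.coeff_add, Polynomial.coeff_C_mul, Polynomial.coeff_X_pow, Polynomial.coeff_C]
  · simp [Polynomial.coeff_add, Polynomial.coeff_C_mul, Polynomial.coeff_X_pow, Polynomial.coeff_C]
  · simp [Polynomial.coeff_add, Polynomial.coeff_C_mul, Polynomial.coeff_X_pow, Polynomial.coeff_C]
  · rw [Polynomial.coeff_eq_zero_of_natDegree_lt (lt_of_le_of_lt h (by omega))]
    simp [Polynomial.coeff_add, Polynomial.coeff_C_mul, Polynomial.coeff_X_pow, Polynomial.coeff_C]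

lemma noRootPoly (r : Polynomial ℂ) : r ^ 3 + p4 * r ^ 2 + p2 * r + p0 ≠ 0 := by
  intro h
  -- degree bound
  have hdeg : r.natDegree ≤ 2 := by
    by_contra hd
    push_neg at hd
    have h3 : r ≠ 0 := by
      rintro rfl
      apply p0_ne
      simpa using h
    have hcube : r ^ 3 = -(p4 * r ^ 2 + p2 * r + p0) := by linear_combination h
    have hdp4 : p4.natDegree ≤ 2 := by unfold p4; compute_degree
    have hdp2 : p2.natDegree ≤ 4 := by unfold p2; compute_degree
    have hdp0 : p0.natDegree ≤ 6 := by unfold p0; compute_degree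
    have e1 : (p4 * r ^ 2).natDegree ≤ 2 + 2 * r.natDegree := by
      refine le_trans (Polynomial.natDegree_mul_le) ?_
      rw [Polynomial.natDegree_pow]
      omega
    have e2 : (p2 * r).natDegree ≤ 2 + 2 * r.natDegree := by
      refine le_trans (Polynomial.natDegree_mul_le) ?_
      omega
    have e3 : p0.natDegree ≤ 2 + 2 * r.natDegree := by omega
    have hb : (p4 * r ^ 2 + p2 * r + p0).natDegree ≤ 2 + 2 * r.natDegree :=
      le_trans (Polynomial.natDegree_add_le _ _)
        (max_le (le_trans (Polynomial.natDegree_add_le _ _) (max_le e1 e2)) e3)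
    have hL : (r ^ 3).natDegree = 3 * r.natDegree := by
      rw [Polynomial.natDegree_pow]
    rw [hcube, Polynomial.natDegree_neg] at hL
    omega
  set a := r.coeff 2 with ha
  set b := r.coeff 1 with hb
  set c := r.coeff 0 with hc
  rw [rep2 r hdeg, ← ha, ← hb, ← hc] at h
  have hE0 := congrArg (Polynomial.eval 0) h
  have hE1 := congrArg (Polynomial.eval 1) h
  have hEm1 := congrArg (Polynomial.eval (-1)) h
  have hE2 := congrArg (Polynomial.eval 2) h
  have hEm2 := congrArg (Polynomial.eval (-2)) h
  have hE3 := congrArg (Polynomial.eval 3) h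
  simp only [p4, p2, p0, Polynomial.eval_add, Polynomial.eval_mul, Polynomial.eval_pow,
    Polynomial.eval_sub, Polynomial.eval_neg, Polynomial.eval_ofNat, Polynomial.eval_C,
    Polynomial.eval_X, Polynomial.eval_zero] at hE0 hE1 hEm1 hE2 hEm2 hE3
  norm_num at hE0 hE1 hEm1 hE2 hEm2 hE3
  have contra : (1:ℂ) = 0 := by
    linear_combination ((14827953112713028671970509029567839/1467147086291068814533699381590000000 : ℂ) + (-891158930517395808276246419774939/264086475532392386616065888686200000 : ℂ)*c + (532622853087979339778261495162579/2640864755323923866160658886862000000 : ℂ)*c^2 + (-1855722675719498845245991009146877/550180157359150805450137268096250000 : ℂ)*b + (97222034673344577657740135206127/220072062943660322180054907238500000 : ℂ)*b*c + (29992646512650672197245893994987/122262257190922401211141615132500000 : ℂ)*b^2 + (-1013967011533054723957805317140739/183393385786383601816712422698750000 : ℂ)*a + (6664003366827465923444181962801/12226225719092240121114161513250000 : ℂ)*a*c + (3088280586514112984720522183731/5094260716288433383797567297187500 : ℂ)*a*b + (12146331172800065549672015047913/30565564297730600302785403783125000 : ℂ)*a^2) * hE0 +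
      ((-301472984398882886239191672539897/68772519669893850681267158512031250 : ℂ) + (4893135280756801061002797425272553/275090078679575402725068634048125000 : ℂ)*c + (-5478296481604446411838163714696/34386259834946925340633579256015625 : ℂ)*c^2 + (-502918943830575189138900250191367/68772519669893850681267158512031250 : ℂ)*b + (12989454412045358073478544994049/68772519669893850681267158512031250 : ℂ)*b*c + (987593761614780948095380191523/13754503933978770136253431702406250 : ℂ)*b^2 + (-5527237349343729507830929736417951/275090078679575402725068634048125000 : ℂ)*a + (11139035164209743782339654498601/34386259834946925340633579256015625 : ℂ)*a*c + (888151789776041105781399601849/2547130358144216691898783648593750 : ℂ)*a*b + (41623541575567588734431029062403/68772519669893850681267158512031250 : ℂ)*a^2) * hE1 +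
      ((-1864272162825707151363075488040413/1650540472077452416350411804288750000 : ℂ) + (39904246952992920765418240179089/91696692893191800908356211349375000 : ℂ)*c + (-1439789393554575929842049283913/66021618883098096654016472171550000 : ℂ)*c^2 + (108159920490737832403988444740177/275090078679575402725068634048125000 : ℂ)*b + (-198891494252229313304322255064/4126351180193631040876029510721875 : ℂ)*b*c + (-5684902008969157199483681420009/206317559009681552043801475536093750 : ℂ)*b^2 + (22872915989766189908738492226151/30565564297730600302785403783125000 : ℂ)*a + (-6356744491095544884488859501503/103158779504840776021900737768046875 : ℂ)*a*c + (-14597228287525193738319291788711/206317559009681552043801475536093750 : ℂ)*a*b + (-10248382785785848950000675751001/206317559009681552043801475536093750 : ℂ)*a^2) * hEm1 +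
      ((-216204236706708622522922354501351419/105634590212956954646426355474480000000 : ℂ) + (1329178914476966698131410133643181/1956196115054758419378265842120000000 : ℂ)*c + (-2396502118597296387908266004810219/105634590212956954646426355474480000000 : ℂ)*c^2 + (915318178267433693350735918723219/1956196115054758419378265842120000000 : ℂ)*b + (-1663508556213350191511579786187061/52817295106478477323213177737240000000 : ℂ)*b*c + (-134523534951590807040392022231673/13204323776619619330803294434310000000 : ℂ)*b^2 + (245299800604046338514798213620903/275090078679575402725068634048125000 : ℂ)*a + (-94527296442058831096455913721333/3301080944154904832700823608577500000 : ℂ)*a*c + (-203603781881322235410031924067203/13204323776619619330803294434310000000 : ℂ)*a*b + (-84747094297623430841424350708069/6602161888309809665401647217155000000 : ℂ)*a^2) * hE2 +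
      ((639323053620277307194474756193477/7042306014197130309761757031632000000 : ℂ) + (-682048589049610495941572577594713/17605765035492825774404392579080000000 : ℂ)*c + (299693197352095182029912859437461/176057650354928257744043925790800000000 : ℂ)*c^2 + (-522124482131256447736870203513521/17605765035492825774404392579080000000 : ℂ)*b + (334194998175693757111887112242793/88028825177464128872021962895400000000 : ℂ)*b*c + (9822310837978721442307684037053/4401441258873206443601098144770000000 : ℂ)*b^2 + (-1226925317439979408335866270363/22007206294366032218005490723850000 : ℂ)*a + (1376842070793851825851156690943/275090078679575402725068634048125000 : ℂ)*a*c + (2868625760514350492177186903171/489049028763689604844566460530000000 : ℂ)*a*b + (1829064888477664814318542999331/440144125887320644360109814477000000 : ℂ)*a^2) * hEm2 +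
      ((-452779366566492672265199052199/36678677157276720363342484539750000 : ℂ) + (-671009580007987925968401733111/41263511801936310408760295107218750 : ℂ)*c + (3497023268988011912029395972773/8252702360387262081752059021443750000 : ℂ)*c^2 + (-1113747486877043831519763140059/91696692893191800908356211349375000 : ℂ)*b + (101787676544227530115269844237/343862598349469253406335792560156250 : ℂ)*b*c) * hE3
  exact one_ne_zero contra

lemma noSqrtPoly (s : Polynomial ℂ) : s ^ 2 ≠ -p0 := by
  intro h
  have hs : s ≠ 0 := by
    rintro rfl
    apply p0_ne
    have h0 : (0:Polynomial ℂ) = -p0 := by simpa using h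
    exact neg_eq_zero.mp h0.symm
  have hdeg6 : p0.natDegree = 6 := by
    unfold p0
    compute_degree!
  have hd : s.natDegree = 3 := by
    have h2 : (s ^ 2).natDegree = 2 * s.natDegree := by
      rw [Polynomial.natDegree_pow]
    rw [h, Polynomial.natDegree_neg, hdeg6] at h2
    omega
  set a := s.coeff 3 with ha
  set b := s.coeff 2 with hb
  set c := s.coeff 1 with hc
  set d := s.coeff 0 with hd0
  rw [rep3 s (le_of_eq hd), ← ha, ← hb, ← hc, ← hd0] at h
  have hE0 := congrArg (Polynomial.eval 0) h
  have hE1 := congrArg (Polynomial.eval 1) h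
  have hEm1 := congrArg (Polynomial.eval (-1)) h
  have hE2 := congrArg (Polynomial.eval 2) h
  have hEm2 := congrArg (Polynomial.eval (-2)) h
  have hE3 := congrArg (Polynomial.eval 3) h
  simp only [p0, Polynomial.eval_add, Polynomial.eval_mul, Polynomial.eval_pow,
    Polynomial.eval_sub, Polynomial.eval_neg, Polynomial.eval_ofNat, Polynomial.eval_C,
    Polynomial.eval_X, Polynomial.eval_zero] at hE0 hE1 hEm1 hE2 hEm2 hE3
  have contra : (1:ℂ) = 0 := by
    linear_combination ((-9710245505637883/3960050948352000 : ℂ) + (-6197619038441/6160079252992000 : ℂ)*c*d + (157689808732553/346504457980800000 : ℂ)*c^2 + (-117180659217/1078013869273600 : ℂ)*b*d + (-1649793335759/1925024766560000 : ℂ)*b*c + (-119894046333/1347517336592000 : ℂ)*b^2 + (-553877363801/1100014152320000 : ℂ)*a*d + (625782672342251/485106241173120000 : ℂ)*a*c + (201876222813/385004953312000 : ℂ)*a*b + (582620815662371/606382801466400000 : ℂ)*a^2) * hE0 +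
      ((12150448045081909/4620059439744000 : ℂ) + (2705584028164309/7276593617596800000 : ℂ)*c*d + (-182652661993/721884287460000 : ℂ)*c^2 + (-1900475535253/3789892509165000 : ℂ)*b*d + (3829786524031/8662611449520000 : ℂ)*b*c + (-501575886011/1082826431190000 : ℂ)*b^2 + (-44181127406081/1819148404399200000 : ℂ)*a*d + (-403019731949/1155014859936000 : ℂ)*a*c + (-1816940827/9625123832800 : ℂ)*a*b) * hE1 +
      ((-655835865099353/4620059439744000 : ℂ) + (4658971303393451/7276593617596800000 : ℂ)*c*d + (182652661993/721884287460000 : ℂ)*c^2 + (8978054455597/15159570036660000 : ℂ)*b*d + (3829786524031/8662611449520000 : ℂ)*b*c + (229034761961/1082826431190000 : ℂ)*b^2 + (974695098591761/1819148404399200000 : ℂ)*a*d + (403019731949/1155014859936000 : ℂ)*a*c + (1816940827/9625123832800 : ℂ)*a*b) * hEm1 +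
      ((-930152769357683/21120271724544000 : ℂ) + (105204299369339/14553187235193600000 : ℂ)*c*d + (553877363801/184802377589760000 : ℂ)*c^2 + (120151739285159/3880849929384960000 : ℂ)*b*d + (1371500735951/138601783192320000 : ℂ)*b*c + (22780230287/1237515921360000 : ℂ)*b^2 + (57261512212151/58212748940774400000 : ℂ)*a*d) * hE2 +
      ((6206146450579049/739209510359040000 : ℂ) + (-384879968335993/29106374470387200000 : ℂ)*c*d + (-553877363801/184802377589760000 : ℂ)*c^2 + (-50596358637719/3880849929384960000 : ℂ)*b*d + (-263746008349/138601783192320000 : ℂ)*b*c + (-181180078/67676651949375 : ℂ)*b^2 + (-522518497804991/58212748940774400000 : ℂ)*a*d) * hEm2 +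
      ((-701743084367/2475031842720000 : ℂ)) * hE3
  exact one_ne_zero contra

def ψ : R2 →ₐ[ℂ] Polynomial ℂ := MvPolynomial.aeval ![Polynomial.X, 1]

lemma ψ_qB4 : ψ (qr * B4) = p4 := by
  simp only [ψ, qr, B4, p4, map_add, map_sub, map_mul, map_pow, map_ofNat,
    map_neg, map_intCast, Polynomial.algebraMap_eq,
    MvPolynomial.aeval_C, MvPolynomial.aeval_X, Matrix.cons_val_zero, Matrix.cons_val_one,
    Matrix.head_cons]
  push_cast
  ring

lemma ψ_qB2 : ψ (qr * B2) = p2 := by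
  simp only [ψ, qr, B2, p2, map_add, map_sub, map_mul, map_pow, map_ofNat,
    map_neg, map_intCast, Polynomial.algebraMap_eq,
    MvPolynomial.aeval_C, MvPolynomial.aeval_X, Matrix.cons_val_zero, Matrix.cons_val_one,
    Matrix.head_cons]
  push_cast
  ring

lemma ψ_qB0 : ψ (qr * B0) = p0 := by
  simp only [ψ, qr, B0, p0, map_add, map_sub, map_mul, map_pow, map_ofNat,
    map_neg, map_intCast, Polynomial.algebraMap_eq,
    MvPolynomial.aeval_C, MvPolynomial.aeval_X, Matrix.cons_val_zero, Matrix.cons_val_one,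
    Matrix.head_cons]
  push_cast
  ring

lemma noRootR (r : R2) : r ^ 3 + (qr * B4) * r ^ 2 + (qr * B2) * r + (qr * B0) ≠ 0 := by
  intro h
  apply noRootPoly (ψ r)
  have h2 : ψ r ^ 3 + ψ (qr * B4) * ψ r ^ 2 + ψ (qr * B2) * ψ r + ψ (qr * B0) = ψ 0 := by
    simp only [← map_pow, ← map_mul, ← map_add]
    exact congrArg ψ h
  rwa [ψ_qB4, ψ_qB2, ψ_qB0, map_zero] at h2

lemma noSqrtR (w : R2) : w ^ 2 ≠ -(qr * B0) := by
  intro h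
  apply noSqrtPoly (ψ w)
  have h2 := congrArg ψ h
  simpa only [map_pow, map_neg, ψ_qB0] using h2

abbrev K2 : Type := FractionRing R2

lemma g0_monic : g0.Monic := by
  unfold g0
  monicity!

def gK : Polynomial K2 := g0.map (algebraMap R2 K2)

lemma gK_eq : gK = Polynomial.X ^ 3 + Polynomial.C (algebraMap R2 K2 (qr * B4)) * Polynomial.X ^ 2
    + Polynomial.C (algebraMap R2 K2 (qr * B2)) * Polynomial.X
    + Polynomial.C (algebraMap R2 K2 (qr * B0)) := by
  simp [gK, g0, Polynomial.map_add, Polynomial.map_mul, Polynomial.map_pow]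

lemma noRootK (r : K2) : Polynomial.eval r gK ≠ 0 := by
  intro h
  have hint : IsIntegral R2 r := ⟨g0, g0_monic, by rwa [← Polynomial.eval_map]⟩
  obtain ⟨r0, hr0⟩ := IsIntegrallyClosed.isIntegral_iff.mp hint
  apply noRootR r0
  apply IsFractionRing.injective R2 K2
  simp only [map_add, map_mul, map_pow, map_zero]
  rw [← hr0, gK_eq] at h
  simp only [Polynomial.eval_add, Polynomial.eval_mul, Polynomial.eval_pow, Polynomial.eval_C,
    Polynomial.eval_X, map_mul] at h
  linear_combination h

lemma noSqrtK (w : K2) : w ^ 2 ≠ -(algebraMap R2 K2 (qr * B0)) := by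
  intro h
  have hint : IsIntegral R2 w := by
    refine ⟨Polynomial.X ^ 2 + Polynomial.C (qr * B0), by monicity!, ?_⟩
    simp only [Polynomial.eval₂_add, Polynomial.eval₂_pow, Polynomial.eval₂_X, Polynomial.eval₂_C]
    rw [h]; ring
  obtain ⟨w0, hw0⟩ := IsIntegrallyClosed.isIntegral_iff.mp hint
  apply noSqrtR w0
  apply IsFractionRing.injective R2 K2
  rw [map_pow, map_neg, hw0, h]


def fK : Polynomial K2 := f0.map (algebraMap R2 K2)

lemma fK_eq : fK = Polynomial.X ^ 6 + Polynomial.C (algebraMap R2 K2 (qr * B4)) * Polynomial.X ^ 4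
    + Polynomial.C (algebraMap R2 K2 (qr * B2)) * Polynomial.X ^ 2 + Polynomial.C (algebraMap R2 K2 (qr * B0)) := by
  simp [fK, f0_eq, Polynomial.map_add, Polynomial.map_mul, Polynomial.map_pow]

lemma fK_eq_comp : fK = gK.comp (Polynomial.X ^ 2) := by
  rw [fK, f0, gK, Polynomial.map_comp, Polynomial.map_pow, Polynomial.map_X]

lemma fK_monic : fK.Monic := f0_monic.map _

lemma gK_monic : gK.Monic := g0_monic.map _

lemma fK_natdeg : fK.natDegree = 6 := by
  rw [fK_eq]; compute_degree!

lemma eval_zero_fK : Polynomial.eval 0 fK = Polynomial.eval 0 gK := by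
  rw [fK_eq_comp, Polynomial.eval_comp]
  norm_num

lemma exists_mif (T : Polynomial K2) (hT0 : T ≠ 0) (hTnu : ¬IsUnit T) :
    ∃ S : Polynomial K2, S.Monic ∧ Irreducible S ∧ S ∣ T := by
  obtain ⟨P, hPi, hPd⟩ := WfDvdMonoid.exists_irreducible_factor (α := Polynomial K2) hTnu hT0
  have hP0 : P ≠ 0 := hPi.ne_zero
  have hlc : P.leadingCoeff ≠ 0 := by simpa [Polynomial.leadingCoeff_eq_zero]
  refine ⟨P * Polynomial.C P.leadingCoeff⁻¹, Polynomial.monic_mul_leadingCoeff_inv hP0, ?_, ?_⟩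
  · exact (irreducible_mul_isUnit (Polynomial.isUnit_C.mpr
      (isUnit_iff_ne_zero.mpr (inv_ne_zero hlc)))).mpr hPi
  · exact dvd_trans ⟨Polynomial.C P.leadingCoeff, by
      rw [mul_assoc, ← Polynomial.C_mul, inv_mul_cancel₀ hlc, Polynomial.C_1, mul_one]⟩ hPd

lemma pos_deg {p : Polynomial K2} (h0 : p ≠ 0) (hnu : ¬IsUnit p) : 0 < p.natDegree := by
  by_contra hcon
  push_neg at hcon
  have hrep := Polynomial.eq_C_of_natDegree_eq_zero (Nat.le_zero.mp hcon)
  apply hnu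
  rw [hrep]
  refine Polynomial.isUnit_C.mpr (isUnit_iff_ne_zero.mpr ?_)
  intro hc
  apply h0
  rw [hrep, hc, map_zero]

lemma monic_dvd_eq {P T : Polynomial K2} (hP : P.Monic) (hT : T.Monic) (hd : P ∣ T)
    (hdeg : T.natDegree ≤ P.natDegree) : P = T := by
  obtain ⟨u, rfl⟩ := hd
  have hu0 : u ≠ 0 := by
    rintro rfl
    rw [mul_zero] at hT
    exact hT.ne_zero rfl
  have hdeg2 : (P * u).natDegree = P.natDegree + u.natDegree :=
    Polynomial.natDegree_mul hP.ne_zero hu0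
  have hu : u.natDegree = 0 := by omega
  have hueq := Polynomial.eq_C_of_natDegree_eq_zero hu
  have hlc : u.coeff 0 = 1 := by
    have h1 : (P * u).leadingCoeff = 1 := hT.leadingCoeff
    rw [Polynomial.leadingCoeff_mul, hP.leadingCoeff, one_mul] at h1
    rwa [Polynomial.leadingCoeff, hu] at h1
  rw [hueq, hlc, Polynomial.C_1, mul_one]

lemma rep2K (p : Polynomial K2) (h : p.natDegree ≤ 2) :
    p = Polynomial.C (p.coeff 2) * Polynomial.X ^ 2 + Polynomial.C (p.coeff 1) * Polynomial.X + Polynomial.C (p.coeff 0) := by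
  ext n
  rcases n with _|_|_|n
  · simp
  · simp [Polynomial.coeff_add, Polynomial.coeff_C_mul, Polynomial.coeff_X_pow, Polynomial.coeff_C]
  · simp [Polynomial.coeff_add, Polynomial.coeff_C_mul, Polynomial.coeff_X_pow, Polynomial.coeff_C]
  · rw [Polynomial.coeff_eq_zero_of_natDegree_lt (lt_of_le_of_lt h (by omega))]
    simp [Polynomial.coeff_add, Polynomial.coeff_C_mul, Polynomial.coeff_X_pow, Polynomial.coeff_C]

lemma comp_negX_negX (p : Polynomial K2) : (p.comp (-Polynomial.X)).comp (-Polynomial.X) = p := by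
  rw [Polynomial.comp_assoc]
  simp

lemma aeval_negX (p : Polynomial K2) : (Polynomial.aeval (-Polynomial.X)) p = p.comp (-Polynomial.X) := by
  rw [Polynomial.comp, Polynomial.aeval_def, Polynomial.algebraMap_eq]

def σe : Polynomial K2 ≃ₐ[K2] Polynomial K2 :=
  AlgEquiv.ofAlgHom (Polynomial.aeval (-Polynomial.X)) (Polynomial.aeval (-Polynomial.X))
    (by
      ext1
      simp [aeval_negX, comp_negX_negX])
    (by
      ext1
      simp [aeval_negX, comp_negX_negX])

lemma irred_comp_negX {P : Polynomial K2} (hP : Irreducible P) : Irreducible (P.comp (-Polynomial.X)) := by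
  have h : P.comp (-Polynomial.X) = σe P := (aeval_negX P).symm
  rw [h]
  exact (MulEquiv.irreducible_iff σe).mpr hP

lemma fK_comp_negX : fK.comp (-Polynomial.X) = fK := by
  rw [fK_eq_comp, Polynomial.comp_assoc]
  congr 1
  rw [Polynomial.pow_comp, Polynomial.X_comp]
  ring

lemma dvd_fK_comp_negX {P : Polynomial K2} (h : P ∣ fK) : P.comp (-Polynomial.X) ∣ fK := by
  obtain ⟨Q, hQ⟩ := h
  refine ⟨Q.comp (-Polynomial.X), ?_⟩
  rw [← fK_comp_negX, hQ, Polynomial.mul_comp]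

lemma irred_neg {p : Polynomial K2} (h : Irreducible p) : Irreducible (-p) := by
  have ha : Associated p (-p) :=
    ⟨⟨-1, -1, by ring, by ring⟩, show p * (-1) = -p from by ring⟩
  exact ha.irreducible h

theorem fK_irred : Irreducible fK := by
  haveI : IsPrincipalIdealRing (Polynomial K2) := EuclideanDomain.to_principal_ideal_domain (R := Polynomial K2)
  by_contra hred
  have hfK0 : fK ≠ 0 := fK_monic.ne_zero
  have hfKnu : ¬IsUnit fK := by
    intro hu
    have := Polynomial.natDegree_eq_zero_of_isUnit hu
    rw [fK_natdeg] at this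
    exact absurd this (by norm_num)
  have hex : ∃ n : ℕ, ∃ P : Polynomial K2, P.Monic ∧ Irreducible P ∧ P ∣ fK ∧ P.natDegree = n := by
    obtain ⟨S, hSm, hSi, hSd⟩ := exists_mif fK hfK0 hfKnu
    exact ⟨S.natDegree, S, hSm, hSi, hSd, rfl⟩
  classical
  obtain ⟨P, hPm, hPi, hPd, hPdeg⟩ := Nat.find_spec hex
  have hmin : ∀ S : Polynomial K2, S.Monic → Irreducible S → S ∣ fK →
      P.natDegree ≤ S.natDegree := by
    intro S hm hi hd
    rw [hPdeg]
    by_contra hlt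
    push_neg at hlt
    exact Nat.find_min hex hlt ⟨S, hm, hi, hd, rfl⟩
  obtain ⟨Q, hfPQ⟩ := hPd
  have hQ0 : Q ≠ 0 := by
    rintro rfl
    rw [mul_zero] at hfPQ
    exact hfK0 hfPQ
  have hP0 : P ≠ 0 := hPm.ne_zero
  have hQm : Q.Monic := hPm.of_mul_monic_left (hfPQ ▸ fK_monic)
  have hdegsum : P.natDegree + Q.natDegree = 6 := by
    have := Polynomial.natDegree_mul hP0 hQ0
    rw [← this, ← hfPQ, fK_natdeg]
  have hp1 : 1 ≤ P.natDegree := pos_deg hP0 hPi.not_isUnit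
  have hp3 : P.natDegree ≤ 3 := by
    by_contra hgt
    push_neg at hgt
    have hQdeg : Q.natDegree ≤ 2 := by omega
    have hQnu : ¬IsUnit Q := by
      intro hu
      have h0 := Polynomial.eq_C_of_natDegree_eq_zero (Polynomial.natDegree_eq_zero_of_isUnit hu)
      have hc1 : Q.coeff 0 = 1 := by
        have h2 := hQm.leadingCoeff
        rwa [Polynomial.leadingCoeff, Polynomial.natDegree_eq_zero_of_isUnit hu] at h2
      have : Q = 1 := by rw [h0, hc1, map_one]
      rw [this, mul_one] at hfPQ
      rw [← hfPQ] at hPi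
      exact hred hPi
    obtain ⟨S, hSm, hSi, hSd⟩ := exists_mif Q hQ0 hQnu
    have h1 := hmin S hSm hSi (hSd.trans ⟨P, by rw [hfPQ]; ring⟩)
    have h2 : S.natDegree ≤ Q.natDegree := Polynomial.natDegree_le_of_dvd hSd hQ0
    omega
  -- case analysis on P.natDegree
  interval_cases hPn : P.natDegree
  · -- degree 1
    have hPeq : P = Polynomial.X + Polynomial.C (P.coeff 0) := by
      have h1 := Polynomial.eq_X_add_C_of_natDegree_le_one (le_of_eq hPn)
      have h2 : P.coeff 1 = 1 := by
        have := hPm.leadingCoeff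
        rwa [Polynomial.leadingCoeff, hPn] at this
      rwa [h2, Polynomial.C_1, one_mul] at h1
    apply noRootK ((-(P.coeff 0)) ^ 2)
    have h3 : Polynomial.eval (-(P.coeff 0)) fK = 0 := by
      rw [hfPQ, Polynomial.eval_mul, hPeq]
      simp
    rwa [fK_eq_comp, Polynomial.eval_comp, Polynomial.eval_pow, Polynomial.eval_X] at h3
  · -- degree 2
    have hPeq : P = Polynomial.X ^ 2 + Polynomial.C (P.coeff 1) * Polynomial.X + Polynomial.C (P.coeff 0) := by
      have h1 := rep2K P (le_of_eq hPn)
      have h2 : P.coeff 2 = 1 := by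
        have := hPm.leadingCoeff
        rwa [Polynomial.leadingCoeff, hPn] at this
      rwa [h2, Polynomial.C_1, one_mul] at h1
    set b := P.coeff 1 with hbdef
    set c := P.coeff 0 with hcdef
    by_cases hb : b = 0
    · -- P = X^2 + C c
      have hPeq2 : P = Polynomial.X ^ 2 + Polynomial.C c := by rw [hPeq, hb]; simp
      have hdvd1 : Polynomial.X + Polynomial.C c ∣ (gK - Polynomial.C (Polynomial.eval (-c) gK)) := by
        have h5 : (Polynomial.X : Polynomial K2) + Polynomial.C c = Polynomial.X - Polynomial.C (-c) := by
          rw [map_neg, sub_neg_eq_add]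
        rw [h5]
        refine Polynomial.dvd_iff_isRoot.mpr ?_
        simp [Polynomial.IsRoot]
      obtain ⟨W, hW⟩ := hdvd1
      have hgKW : gK = (Polynomial.X + Polynomial.C c) * W + Polynomial.C (Polynomial.eval (-c) gK) :=
        eq_add_of_sub_eq hW
      have hfKrem : fK = (Polynomial.X ^ 2 + Polynomial.C c) * W.comp (Polynomial.X ^ 2)
          + Polynomial.C (Polynomial.eval (-c) gK) := by
        rw [fK_eq_comp]
        conv_lhs => rw [hgKW]
        simp only [Polynomial.add_comp, Polynomial.mul_comp, Polynomial.X_comp,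
          Polynomial.C_comp]
      have hPdvdC : P ∣ Polynomial.C (Polynomial.eval (-c) gK) := by
        have h6 : P ∣ (Polynomial.X ^ 2 + Polynomial.C c) * W.comp (Polynomial.X ^ 2) := by
          rw [hPeq2]
          exact dvd_mul_right _ _
        have h7 := dvd_sub (hfPQ ▸ (dvd_mul_right P Q)) h6
        rwa [show fK - (Polynomial.X ^ 2 + Polynomial.C c) * W.comp (Polynomial.X ^ 2)
          = Polynomial.C (Polynomial.eval (-c) gK) from by rw [hfKrem]; ring] at h7
      have h8 : Polynomial.eval (-c) gK = 0 := by
        by_contra hne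
        have h9 := Polynomial.natDegree_le_of_dvd hPdvdC (by simpa using hne)
        rw [hPn, Polynomial.natDegree_C] at h9
        omega
      exact noRootK _ h8
    · -- b ≠ 0
      set P2 := P.comp (-Polynomial.X) with hP2def
      have hP2eq : P2 = Polynomial.X ^ 2 - Polynomial.C b * Polynomial.X + Polynomial.C c := by
        rw [hP2def, hPeq]
        simp only [Polynomial.add_comp, Polynomial.mul_comp, Polynomial.pow_comp,
          Polynomial.X_comp, Polynomial.C_comp]
        ring
      have hP2m : P2.Monic := by
        rw [hP2eq]
        monicity!
      have hP2deg : P2.natDegree = 2 := by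
        rw [hP2def, Polynomial.natDegree_comp, hPn]
        simp
      have hP2i : Irreducible P2 := irred_comp_negX hPi
      have hP2d : P2 ∣ fK := dvd_fK_comp_negX ⟨Q, hfPQ⟩
      have hPne : ¬ P ∣ P2 := by
        intro hdv
        have heq : P = P2 := monic_dvd_eq hPm hP2m hdv (by omega)
        have hco := congrArg (fun p => Polynomial.coeff p 1) heq
        rw [hPeq, hP2eq] at hco
        simp only [Polynomial.coeff_add, Polynomial.coeff_sub, Polynomial.coeff_C_mul,
          Polynomial.coeff_X_pow, Polynomial.coeff_X, Polynomial.coeff_C] at hco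
        norm_num at hco
        exact hb (by linear_combination hco/2)
      have hcop : IsCoprime P P2 := (hPi.isCoprime_or_dvd P2).resolve_right hPne
      have hprod : P * P2 ∣ fK := hcop.mul_dvd ⟨Q, hfPQ⟩ hP2d
      have hPP2 : P * P2 = Polynomial.X ^ 4 + Polynomial.C (2 * c - b ^ 2) * Polynomial.X ^ 2 + Polynomial.C (c ^ 2) := by
        rw [hPeq, hP2eq]
        simp only [map_sub, map_mul, map_pow, map_ofNat]
        ring
      set a4 := algebraMap R2 K2 (qr * B4) with ha4
      set a2 := algebraMap R2 K2 (qr * B2) with ha2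
      set a0 := algebraMap R2 K2 (qr * B0) with ha0
      set ee := a4 - (2 * c - b ^ 2) with hee
      set rr := a2 - (c ^ 2 + (2 * c - b ^ 2) * ee) with hrr
      set ss := a0 - c ^ 2 * ee with hss
      have hgKdiv : gK = (Polynomial.X ^ 2 + Polynomial.C (2 * c - b ^ 2) * Polynomial.X + Polynomial.C (c ^ 2)) * (Polynomial.X + Polynomial.C ee)
          + (Polynomial.C rr * Polynomial.X + Polynomial.C ss) := by
        rw [gK_eq, ← ha4, ← ha2, ← ha0, hrr, hss, hee]
        simp only [map_sub, map_add, map_mul, map_pow, map_ofNat]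
        ring
      have hfKrem : fK = (P * P2) * (Polynomial.X ^ 2 + Polynomial.C ee) + (Polynomial.C rr * Polynomial.X ^ 2 + Polynomial.C ss) := by
        rw [fK_eq_comp, hgKdiv, hPP2]
        simp only [Polynomial.add_comp, Polynomial.mul_comp, Polynomial.pow_comp,
          Polynomial.X_comp, Polynomial.C_comp]
        ring
      have hremdvd : P * P2 ∣ Polynomial.C rr * Polynomial.X ^ 2 + Polynomial.C ss := by
        have h7 := dvd_sub hprod (dvd_mul_right (P * P2) (Polynomial.X ^ 2 + Polynomial.C ee))
        rwa [show fK - (P * P2) * (Polynomial.X ^ 2 + Polynomial.C ee) = Polynomial.C rr * Polynomial.X ^ 2 + Polynomial.C ss from by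
          rw [hfKrem]; ring] at h7
      have hrem0 : Polynomial.C rr * Polynomial.X ^ 2 + Polynomial.C ss = 0 := by
        by_contra hne
        have h9 := Polynomial.natDegree_le_of_dvd hremdvd hne
        have h10 : (P * P2).natDegree = 4 := by
          rw [Polynomial.natDegree_mul hP0 hP2m.ne_zero, hPn, hP2deg]
        have h11 : (Polynomial.C rr * Polynomial.X ^ 2 + Polynomial.C ss).natDegree ≤ 2 := by
          refine le_trans (Polynomial.natDegree_add_le _ _) ?_
          refine max_le (le_trans (Polynomial.natDegree_mul_le) ?_) ?_
          · simp
          · simp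
        omega
      have hrr0 : rr = 0 := by
        have := congrArg (fun p => Polynomial.coeff p 2) hrem0
        simpa [Polynomial.coeff_add, Polynomial.coeff_C_mul, Polynomial.coeff_X_pow,
          Polynomial.coeff_C] using this
      have hss0 : ss = 0 := by
        have := congrArg (fun p => Polynomial.coeff p 0) hrem0
        simpa [Polynomial.coeff_add, Polynomial.coeff_C_mul, Polynomial.coeff_X_pow,
          Polynomial.coeff_C] using this
      have hroot : Polynomial.eval (-ee) gK = 0 := by
        rw [hgKdiv, hrr0, hss0]
        simp
      exact noRootK _ hroot
  · -- degree 3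
    set P3 := -(P.comp (-Polynomial.X)) with hP3def
    have hcompdeg : (P.comp (-Polynomial.X)).natDegree = 3 := by
      rw [Polynomial.natDegree_comp, hPn]
      simp
    have hP3deg : P3.natDegree = 3 := by
      rw [hP3def, Polynomial.natDegree_neg, hcompdeg]
    have hP3m : P3.Monic := by
      have hlc : (P.comp (-Polynomial.X)).leadingCoeff = -1 := by
        rw [Polynomial.leadingCoeff_comp (by simp)]
        rw [hPm.leadingCoeff, hPn]
        norm_num
      unfold Polynomial.Monic
      rw [hP3def, Polynomial.leadingCoeff_neg, hlc]
      norm_num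
    have hP3i : Irreducible P3 := irred_neg (irred_comp_negX hPi)
    have hP3d : P3 ∣ fK := by
      rw [hP3def]
      exact (neg_dvd).mpr (dvd_fK_comp_negX ⟨Q, hfPQ⟩)
    have hQdeg : Q.natDegree = 3 := by omega
    have hQirr : Irreducible Q := by
      by_contra hQred
      have hQnu : ¬IsUnit Q := by
        intro hu
        have := Polynomial.natDegree_eq_zero_of_isUnit hu
        omega
      obtain ⟨S, hSm, hSi, hSd⟩ := exists_mif Q hQ0 hQnu
      have h1 := hmin S hSm hSi (hSd.trans ⟨P, by rw [hfPQ]; ring⟩)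
      have h2 : S.natDegree ≤ Q.natDegree := Polynomial.natDegree_le_of_dvd hSd hQ0
      have h3 : S = Q := monic_dvd_eq hSm hQm hSd (by omega)
      rw [h3] at hSi
      exact hQred hSi
    have hsplit : P3 ∣ P * Q := by rw [← hfPQ]; exact hP3d
    have hcoeff0 : (P.comp (-Polynomial.X)).coeff 0 = P.coeff 0 := by
      rw [Polynomial.coeff_zero_eq_eval_zero, Polynomial.eval_comp]
      simp [Polynomial.coeff_zero_eq_eval_zero]
    have hPQcases : P3 ∣ P ∨ P3 ∣ Q := by
      rcases hP3i.isCoprime_or_dvd P with hcp | hdv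
      · exact Or.inr (hcp.dvd_of_dvd_mul_left hsplit)
      · exact Or.inl hdv
    rcases hPQcases with hdvP | hdvQ
    · have heq : P3 = P := monic_dvd_eq hP3m hPm hdvP (by omega)
      have h5 := congrArg (fun p => Polynomial.coeff p 0) heq
      simp only [hP3def, Polynomial.coeff_neg, hcoeff0] at h5
      have h6 : P.coeff 0 = 0 := by linear_combination -h5/2
      have h7 : Polynomial.eval 0 fK = 0 := by
        rw [hfPQ, Polynomial.eval_mul, ← Polynomial.coeff_zero_eq_eval_zero, h6, zero_mul]
      rw [eval_zero_fK] at h7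
      exact noRootK 0 h7
    · have heq : P3 = Q := monic_dvd_eq hP3m hQm hdvQ (by omega)
      have h5 : Polynomial.eval 0 fK = -(Polynomial.eval 0 P) ^ 2 := by
        rw [hfPQ, Polynomial.eval_mul, ← heq, hP3def]
        rw [Polynomial.eval_neg, Polynomial.eval_comp]
        simp
        ring
      have h6 : Polynomial.eval 0 gK = Polynomial.eval 0 P ^ 2 * (-1) := by
        rw [← eval_zero_fK, h5]; ring
      have h7 : (Polynomial.eval 0 P) ^ 2 = -(algebraMap R2 K2 (qr * B0)) := by
        have h8 : Polynomial.eval 0 gK = algebraMap R2 K2 (qr * B0) := by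
          rw [gK_eq]
          simp
        rw [h8] at h6
        linear_combination h6
      exact noSqrtK _ h7

end Stmt14

/-- F₆ is absolutely irreducible: irreducible over the algebraic closure of ℚ(i)
(equivalently, over ℂ). -/
theorem stmt14 : Irreducible F₆ := by
  haveI : IsIntegrallyClosed R2 := UniqueFactorizationMonoid.instIsIntegrallyClosed
  have h2 : Irreducible f0 :=
    (f0_monic.irreducible_iff_irreducible_map_fraction_map (K := Stmt14.K2)).mpr
      Stmt14.fK_irred
  have hu4 : IsUnit (4 : Polynomial R2) := by
    have h := IsUnit.map (algebraMap ℂ (Polynomial R2))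
      (isUnit_iff_ne_zero.mpr (by norm_num : (4:ℂ) ≠ 0))
    rwa [map_ofNat] at h
  have h3 : Irreducible ((4 : Polynomial R2) * f0) := (irreducible_isUnit_mul hu4).mpr h2
  rw [← hF] at h3
  exact (MulEquiv.irreducible_iff (MvPolynomial.finSuccEquiv ℂ 2)).mp h3

end
end
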